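/- arXiv:1302.4196 — 2 statements merged into one kernel-verified Lean document; each statement's English description precedes it below -/
import Mathlib

section
/- Let B be an m×m column-stochastic irreducible nonnegative matrix. Then the set of eigenvalues of B of modulus 1 is a finite cyclic group of roots of unity (under multiplication), of order at most m. -/
/-!
If `B x = μ x` with `‖μ‖ = 1`, the moduli `r i = ‖x i‖` satisfy `r ≤ B r`; as `B` preserves
coordinate sums, `B r = r`, and irreducibility makes `r` positive. Hence every triangle inequality
`‖∑ j, B i j * x j‖ ≤ ∑ j, B i j * ‖x j‖` is an equality, so the phases `d = x / r` satisfy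
`B i j * d j = μ * d i * B i j`: `B` is diagonally similar to `μ • B`, and multiplication by `μ`
maps the spectrum into itself. The peripheral spectrum is therefore a finite set of nonzero numbers
containing `1` and closed under multiplication. Multiplication by any of its elements permutes
such a set, so as in Fermat's little theorem its `h` elements are `h`-th roots of unity, and there
are no more than `h` of those. Finally `h ≤ m` because eigenvalues are roots of the characteristic
polynomial.
-/

open Finset

theorem Finset.pow_card_eq_one_of_mul_mem {R : Type*} [CommRing R] [IsDomain R]
    {S : Finset R} (h0 : (0 : R) ∉ S) (hmul : ∀ x ∈ S, ∀ y ∈ S, x * y ∈ S) {z : R} (hz : z ∈ S) :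
    z ^ S.card = 1 := by
  classical
  have hz0 : z ≠ 0 := ne_of_mem_of_not_mem hz h0
  have hinj : Set.InjOn (z * ·) S := fun x _ y _ hxy => mul_left_cancel₀ hz0 hxy
  have himage : S.image (z * ·) = S :=
    eq_of_subset_of_card_le (image_subset_iff.2 fun x hx => hmul z hz x hx)
      (card_image_of_injOn hinj).ge
  have hprod : ∏ x ∈ S, x ≠ 0 := prod_ne_zero_iff.2 fun x hx hx0 => h0 (hx0 ▸ hx)
  have : z ^ S.card * ∏ x ∈ S, x = 1 * ∏ x ∈ S, x :=
    calc z ^ S.card * ∏ x ∈ S, x = ∏ x ∈ S, z * x := by rw [prod_mul_distrib, prod_const]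
      _ = ∏ x ∈ S.image (z * ·), x := (prod_image (f := id) hinj).symm
      _ = 1 * ∏ x ∈ S, x := by rw [himage, one_mul]
  exact mul_right_cancel₀ hprod this

theorem Finset.coe_eq_setOf_pow_card_eq_one {R : Type*} [CommRing R] [IsDomain R]
    {S : Finset R} (hS : S.Nonempty) (h0 : (0 : R) ∉ S)
    (hmul : ∀ x ∈ S, ∀ y ∈ S, x * y ∈ S) :
    (S : Set R) = {z | z ^ S.card = 1} := by
  have hroots : S = Polynomial.nthRootsFinset S.card (1 : R) := by
    refine eq_of_subset_of_card_le (fun z hz => ?_) ?_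
    · rw [Polynomial.mem_nthRootsFinset hS.card_pos]
      exact pow_card_eq_one_of_mul_mem h0 hmul hz
    · classical
      rw [Polynomial.nthRootsFinset_def]
      exact (Multiset.toFinset_card_le _).trans (Polynomial.card_nthRoots _ _)
  ext z
  conv_lhs => rw [hroots]
  simp [Polynomial.mem_nthRootsFinset hS.card_pos]

theorem Complex.eq_mul_norm_of_sum_eq_mul_sum_norm {ι : Type*} {s : Finset ι} {w : ι → ℝ}
    {v : ι → ℂ} {c : ℂ} (hw : ∀ j ∈ s, 0 ≤ w j) (hc : ‖c‖ = 1)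
    (h : ∑ j ∈ s, (w j : ℂ) * v j = c * ↑(∑ j ∈ s, w j * ‖v j‖)) {j : ι} (hj : j ∈ s)
    (hwj : w j ≠ 0) : v j = c * ‖v j‖ := by
  have hc0 : c ≠ 0 := norm_ne_zero_iff.1 (hc ▸ one_ne_zero)
  set u : ι → ℂ := fun j => c⁻¹ * v j
  have hu : ∀ j, ‖u j‖ = ‖v j‖ := fun j => by simp [u, hc]
  have hsum : ∑ j ∈ s, w j * (u j).re = ∑ j ∈ s, w j * ‖u j‖ := by
    have : ∑ j ∈ s, (w j : ℂ) * u j = ↑(∑ j ∈ s, w j * ‖v j‖) := by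
      simp only [u, mul_left_comm _ c⁻¹, ← mul_sum, h, inv_mul_cancel_left₀ hc0]
    simpa [hu, re_ofReal_mul] using congr_arg re this
  have hre : (u j).re = ‖u j‖ :=
    mul_left_cancel₀ hwj <| (sum_eq_sum_iff_of_le fun i hi =>
      mul_le_mul_of_nonneg_left (re_le_norm _) (hw i hi)).1 hsum j hj
  calc v j = c * u j := by simp [u, hc0]
    _ = c * ‖v j‖ := by
      rw [eq_re_of_ofReal_le (r := 0) (z := u j) (by simpa using re_eq_norm.1 hre), hre, hu]

namespace Matrix

variable {ι : Type*} [Fintype ι] [DecidableEq ι]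

theorem mem_spectrum_iff_exists_mulVec_eq_smul {K : Type*} [Field K] {A : Matrix ι ι K} {z : K} :
    z ∈ spectrum K A ↔ ∃ v ≠ 0, A *ᵥ v = z • v := by
  rw [← spectrum_toLin', ← Module.End.hasEigenvalue_iff_mem_spectrum,
    Module.End.hasEigenvalue_iff, Submodule.ne_bot_iff]
  simp [and_comm]

theorem mem_spectrum_of_vecMul_eq_smul {K : Type*} [Field K] {A : Matrix ι ι K} {z : K}
    {v : ι → K} (hv : v ≠ 0) (h : v ᵥ* A = z • v) : z ∈ spectrum K A := by
  rw [spectrum.mem_iff, Algebra.algebraMap_eq_smul_one, isUnit_iff_isUnit_det, isUnit_iff_ne_zero,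
    not_not, ← exists_vecMul_eq_zero_iff]
  exact ⟨v, hv, by rw [vecMul_sub, h, vecMul_smul, vecMul_one, sub_self]⟩

theorem one_mem_spectrum_map_of_mem_colStochastic [Nonempty ι] {R K : Type*} [Ring R]
    [PartialOrder R] [IsOrderedRing R] [Field K] (f : R →+* K) {B : Matrix ι ι R}
    (hB : B ∈ colStochastic R ι) : (1 : K) ∈ spectrum K (B.map f) :=
  mem_spectrum_of_vecMul_eq_smul (v := 1) one_ne_zero <| funext fun j => by
    simpa using (RingHom.map_vecMul f B 1 j).symm.trans (congr_arg f (congr_fun hB.2 j))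

theorem mul_mem_spectrum_of_phase {K : Type*} [Field K] {A : Matrix ι ι K} {μ z : K}
    {d : ι → K} (hd : ∀ i, d i ≠ 0) (hA : ∀ i j, A i j * d j = μ * d i * A i j)
    (hz : z ∈ spectrum K A) : μ * z ∈ spectrum K A := by
  obtain ⟨v, hv, hAv⟩ := mem_spectrum_iff_exists_mulVec_eq_smul.1 hz
  refine mem_spectrum_iff_exists_mulVec_eq_smul.2 ⟨fun i => d i * v i, ?_, funext fun i => ?_⟩
  · obtain ⟨i, hi⟩ := Function.ne_iff.1 hv
    exact Function.ne_iff.2 ⟨i, mul_ne_zero (hd i) hi⟩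
  · have hrow : ∑ j, A i j * v j = z * v i := congr_fun hAv i
    calc (A *ᵥ fun i => d i * v i) i = μ * d i * ∑ j, A i j * v j := by
          simp only [mulVec, dotProduct, mul_sum, ← mul_assoc, hA]
      _ = ((μ * z) • fun i => d i * v i) i := by
          rw [hrow, Pi.smul_apply, smul_eq_mul]
          ring

theorem mulVec_eq_self_of_le_mulVec {R : Type*} [Ring R] [PartialOrder R] [IsOrderedRing R]
    {B : Matrix ι ι R} (hB : B ∈ colStochastic R ι) {r : ι → R} (hr : r ≤ B *ᵥ r) :
    B *ᵥ r = r :=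
  funext fun i => ((sum_eq_sum_iff_of_le fun i _ => hr i).1
    (sum_mulVec_of_mem_colStochastic hB).symm i (mem_univ i)).symm

theorem IsIrreducible.pos_of_mulVec_eq_self {R : Type*} [Ring R] [LinearOrder R]
    [IsStrictOrderedRing R] {B : Matrix ι ι R} (hB : B.IsIrreducible) {r : ι → R} (hr0 : 0 ≤ r)
    (hr : r ≠ 0) (hBr : B *ᵥ r = r) (i : ι) : 0 < r i := by
  obtain ⟨j, hj⟩ : ∃ j, r j ≠ 0 := Function.ne_iff.1 hr
  obtain ⟨k, -, hk⟩ := (isIrreducible_iff_exists_pow_pos hB.nonneg).1 hB i j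
  have hBkr : ∀ k : ℕ, (B ^ k) *ᵥ r = r := by
    intro k
    induction k with
    | zero => exact one_mulVec r
    | succ k ih => rw [pow_succ, ← mulVec_mulVec, hBr, ih]
  rw [← hBkr k]
  exact sum_pos' (fun l _ => mul_nonneg (pow_apply_nonneg hB.nonneg k i l) (hr0 l))
    ⟨j, mem_univ j, mul_pos hk ((hr0 j).lt_of_ne' hj)⟩

theorem exists_phase_of_mulVec_eq_smul {B : Matrix ι ι ℝ} (hB : B ∈ colStochastic ℝ ι)
    (hirr : B.IsIrreducible) {μ : ℂ} (hμ : ‖μ‖ = 1) {x : ι → ℂ} (hx : x ≠ 0)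
    (hBx : B.map Complex.ofReal *ᵥ x = μ • x) :
    ∃ d : ι → ℂ, (∀ i, d i ≠ 0) ∧ ∀ i j, (B i j : ℂ) * d j = μ * d i * B i j := by
  have hrow : ∀ i, ∑ j, (B i j : ℂ) * x j = μ * x i := fun i => congr_fun hBx i
  set r : ι → ℝ := fun i => ‖x i‖
  have hle : r ≤ B *ᵥ r := fun i => by
    calc r i = ‖∑ j, (B i j : ℂ) * x j‖ := by simp [r, hrow, hμ]
      _ ≤ ∑ j, ‖(B i j : ℂ) * x j‖ := norm_sum_le _ _
      _ = (B *ᵥ r) i := by simp [mulVec, dotProduct, r, abs_of_nonneg (hirr.nonneg _ _)]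
  have hBr := mulVec_eq_self_of_le_mulVec hB hle
  have hr : ∀ i, 0 < r i := hirr.pos_of_mulVec_eq_self (fun i => norm_nonneg _)
    (fun h => hx (funext fun i => norm_eq_zero.1 (congr_fun h i))) hBr
  have hr0 : ∀ i, (r i : ℂ) ≠ 0 := fun i => Complex.ofReal_ne_zero.2 (hr i).ne'
  refine ⟨fun i => x i / r i, fun i => div_ne_zero (norm_ne_zero_iff.1 (hr i).ne') (hr0 i),
    fun i j => ?_⟩
  rcases eq_or_ne (B i j) 0 with hBij | hBij
  · simp [hBij]
  have hd : ‖μ * (x i / r i)‖ = 1 := by simp [r, hμ, (hr i).ne']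
  have hsum : ∑ j, (B i j : ℂ) * x j = μ * (x i / r i) * ↑(∑ j, B i j * ‖x j‖) := by
    rw [hrow, show ∑ j, B i j * ‖x j‖ = r i from congr_fun hBr i, mul_assoc,
      div_mul_cancel₀ _ (hr0 i)]
  have hxj := Complex.eq_mul_norm_of_sum_eq_mul_sum_norm (fun j _ => hirr.nonneg i j) hd hsum
    (mem_univ j) hBij
  change (B i j : ℂ) * (x j / r j) = _
  rw [hxj, mul_div_cancel_right₀ _ (hr0 j)]
  ring

theorem mul_mem_spectrum_of_norm_eq_one {B : Matrix ι ι ℝ} (hB : B ∈ colStochastic ℝ ι)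
    (hirr : B.IsIrreducible) {μ z : ℂ} (hμ : μ ∈ spectrum ℂ (B.map Complex.ofReal))
    (hμ1 : ‖μ‖ = 1) (hz : z ∈ spectrum ℂ (B.map Complex.ofReal)) :
    μ * z ∈ spectrum ℂ (B.map Complex.ofReal) := by
  obtain ⟨x, hx, hBx⟩ := mem_spectrum_iff_exists_mulVec_eq_smul.1 hμ
  obtain ⟨d, hd, hphase⟩ := exists_phase_of_mulVec_eq_smul hB hirr hμ1 hx hBx
  exact mul_mem_spectrum_of_phase hd hphase hz

section Peripheral

variable {K : Type*} [NormedField K] [DecidableEq K]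

noncomputable def peripheralSpectrum (A : Matrix ι ι K) : Finset K :=
  A.charpoly.roots.toFinset.filter (‖·‖ = 1)

theorem mem_peripheralSpectrum {A : Matrix ι ι K} {z : K} :
    z ∈ A.peripheralSpectrum ↔ z ∈ spectrum K A ∧ ‖z‖ = 1 := by
  rw [peripheralSpectrum, mem_filter, Multiset.mem_toFinset,
    Polynomial.mem_roots A.charpoly_monic.ne_zero, mem_spectrum_iff_isRoot_charpoly]

theorem card_peripheralSpectrum_le (A : Matrix ι ι K) :
    A.peripheralSpectrum.card ≤ Fintype.card ι :=
  calc A.peripheralSpectrum.card ≤ A.charpoly.roots.toFinset.card := card_filter_le _ _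
    _ ≤ Multiset.card A.charpoly.roots := Multiset.toFinset_card_le _
    _ ≤ A.charpoly.natDegree := Polynomial.card_roots' _
    _ = Fintype.card ι := charpoly_natDegree_eq_dim A

end Peripheral

end Matrix

open Matrix in
/-- The peripheral spectrum of a column-stochastic irreducible nonnegative matrix is the
(cyclic) group of `h`-th roots of unity for some `1 ≤ h ≤ m`. -/
theorem peripheral_spectrum_roots_of_unity
    (m : ℕ) (hm : 1 ≤ m) (B : Matrix (Fin m) (Fin m) ℝ)
    (hpos : ∀ i j, 0 ≤ B i j) (hcol : ∀ j, ∑ i, B i j = 1)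
    (hirr : ∀ i j, ∃ k : ℕ, 1 ≤ k ∧ 0 < (B ^ k) i j) :
    ∃ h : ℕ, 1 ≤ h ∧ h ≤ m ∧
      {z : ℂ | z ∈ spectrum ℂ (B.map (Complex.ofReal)) ∧ ‖z‖ = 1} =
        {z : ℂ | z ^ h = 1} := by
  have : Nonempty (Fin m) := ⟨⟨0, hm⟩⟩
  have hB : B ∈ colStochastic ℝ (Fin m) := mem_colStochastic_iff_sum.2 ⟨hpos, hcol⟩
  have hBirr : B.IsIrreducible := (isIrreducible_iff_exists_pow_pos hpos).2 hirr
  set P := (B.map Complex.ofReal).peripheralSpectrum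
  have h1 : 1 ∈ P := mem_peripheralSpectrum.2
    ⟨one_mem_spectrum_map_of_mem_colStochastic Complex.ofRealHom hB, norm_one⟩
  have h0 : 0 ∉ P := fun h => by simpa using (mem_peripheralSpectrum.1 h).2
  have hmul : ∀ x ∈ P, ∀ y ∈ P, x * y ∈ P := by
    simp only [P, mem_peripheralSpectrum, norm_mul]
    rintro x ⟨hx, hx1⟩ y ⟨hy, hy1⟩
    exact ⟨mul_mem_spectrum_of_norm_eq_one hB hBirr hx hx1 hy, by rw [hx1, hy1, one_mul]⟩
  refine ⟨P.card, card_pos.2 ⟨1, h1⟩,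
    (card_peripheralSpectrum_le _).trans_eq (Fintype.card_fin m), ?_⟩
  rw [← coe_eq_setOf_pow_card_eq_one ⟨1, h1⟩ h0 hmul]
  ext z
  exact mem_peripheralSpectrum.symm
end

section
/- Let B be an m×m column-stochastic irreducible matrix with index of imprimitivity h = |σ(B) ∩ Γ|. Then the sequence of matrix powers (B^{hk})_{k ∈ ℕ} converges as k → ∞. -/
/-!
Over `ℂ`, a column-stochastic `B` is power bounded (all entries of `Bⁿ` lie in `[0, 1]`), so
its eigenvalues lie in the closed unit disk and a Jordan block of `Bʰ` for the eigenvalue `1`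
would make `‖Bʰᵏ v‖` grow linearly; hence `Bʰᵏ` converges as soon as every unimodular
eigenvalue `λ` of `B` satisfies `λʰ = 1`. For such `λ` with eigenvector `x`, `|x|` is a fixed
point of `B`, positive by irreducibility, and equality in the triangle inequality forces the
phases `x i / |x i|` to conjugate `B` into `λ B`. So multiplication by `λ` permutes the `h`
unimodular eigenvalues, and comparing their products gives `λʰ = 1`.
-/

open Filter Finset Matrix Topology Pointwise

theorem tendsto_choose_mul_pow_sub_nhds_zero {𝕜 : Type*} [NormedField 𝕜] [CompleteSpace 𝕜]
    {μ : 𝕜} (hμ : ‖μ‖ < 1) (j : ℕ) :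
    Tendsto (fun n => (n.choose j : 𝕜) * μ ^ (n - j)) atTop (𝓝 0) := by
  rw [← tendsto_add_atTop_iff_nat j]
  simpa using (summable_choose_mul_geometric_of_norm_lt_one j hμ).tendsto_atTop_zero

theorem sum_smul_eq_of_norm_sum_smul_eq {ι V : Type*} [Fintype ι] [NormedAddCommGroup V]
    [NormedSpace ℝ V] [StrictConvexSpace ℝ V] {w : ι → ℝ} {z : ι → V} {r : ℝ}
    (h0 : ∀ i, 0 ≤ w i) (h1 : ∑ i, w i = 1) (hz : ∀ i, ‖z i‖ ≤ r) (hr : ‖∑ i, w i • z i‖ = r)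
    {j : ι} (hj : w j ≠ 0) : ∑ i, w i • z i = z j := by
  have hconst (i : ι) : w i • z i = w i • z j := by
    rcases eq_or_ne (w i) 0 with hi | hi
    · simp [hi]
    by_contra hne
    refine (norm_sum_lt_of_strictConvexSpace (fun k _ => h0 k) h1 (mem_univ i) (mem_univ j)
      (fun h => hne (by rw [h])) hi hj fun k _ => hz k).ne hr
  rw [sum_congr rfl fun i _ => hconst i, ← sum_smul, h1, one_smul]

theorem pow_ncard_eq_one_of_mul_mem {K : Type*} [CommGroupWithZero K] {S : Set K}
    (hS : S.Finite) (h0 : 0 ∉ S) {c : K} (hc : ∀ z ∈ S, c * z ∈ S) : c ^ S.ncard = 1 := by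
  classical
  rcases S.eq_empty_or_nonempty with rfl | ⟨z₀, hz₀⟩
  · simp
  have hc0 : c ≠ 0 := fun h => h0 (by simpa [h] using hc z₀ hz₀)
  set T := hS.toFinset
  have himage : T.image (c * ·) = T :=
    eq_of_subset_of_card_le (fun _ hy => by
      obtain ⟨z, hz, rfl⟩ := mem_image.1 hy
      simpa [T] using hc z (by simpa [T] using hz))
      (card_image_of_injective _ (mul_right_injective₀ hc0)).ge
  have hprod0 : ∏ z ∈ T, z ≠ 0 :=
    prod_ne_zero_iff.2 fun z hz => ne_of_mem_of_not_mem (hS.mem_toFinset.1 hz) h0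
  refine mul_right_cancel₀ hprod0 ?_
  calc c ^ S.ncard * ∏ z ∈ T, z = ∏ z ∈ T, c * z := by
        rw [prod_mul_distrib, prod_const, Set.ncard_eq_toFinset_card S hS]
    _ = ∏ z ∈ T.image (c * ·), z :=
        (prod_image (f := id) fun _ _ _ _ h => mul_left_cancel₀ hc0 h).symm
    _ = 1 * ∏ z ∈ T, z := by rw [himage, one_mul]

namespace Module.End

variable {R M : Type*} [CommRing R] [AddCommGroup M] [Module R M]

theorem pow_apply_eq_sum_choose_of_pow_sub_smul_apply_eq_zero {f : End R M} {μ : R} {d : ℕ}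
    {v : M} (hv : ((f - μ • 1) ^ d) v = 0) (n : ℕ) :
    (f ^ n) v = ∑ j ∈ range d, ((n.choose j : R) * μ ^ (n - j)) • ((f - μ • 1) ^ j) v := by
  set N := f - μ • 1
  set g : ℕ → M := fun j => ((n.choose j : R) * μ ^ (n - j)) • (N ^ j) v
  have hcomm : Commute N (μ • 1) := (Commute.one_right N).smul_right μ
  have hexpand : (f ^ n) v = ∑ j ∈ range (n + 1), g j := by
    rw [← sub_add_cancel f (μ • 1), hcomm.add_pow, LinearMap.sum_apply]
    refine sum_congr rfl fun j _ => ?_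
    simp only [g, smul_pow, one_pow, mul_smul_comm, mul_one, ← Nat.cast_comm, ← nsmul_eq_mul,
      LinearMap.smul_apply]
    rw [smul_assoc, smul_comm]
  have hsum_eq (k : ℕ) (hkle : k ≤ n + 1 + d) (hk : ∀ j, k ≤ j → g j = 0) :
      ∑ j ∈ range k, g j = ∑ j ∈ range (n + 1 + d), g j :=
    sum_subset (range_subset_range.2 hkle) fun j _ hj => hk j (by simpa using hj)
  rw [hexpand, hsum_eq _ (by omega) fun j hj => by simp [g, Nat.choose_eq_zero_of_lt hj],
    hsum_eq d (by omega) fun j hj => ?_]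
  rw [← Nat.sub_add_cancel hj]
  simp only [g, pow_add, mul_apply, hv, map_zero, smul_zero]

section NormedField

variable {𝕜 V : Type*} [NormedField 𝕜] [NormedAddCommGroup V] [NormedSpace 𝕜 V]
  {f : End 𝕜 V}

theorem tendsto_pow_apply_nhds_zero_of_norm_lt_one [CompleteSpace 𝕜] {μ : 𝕜} (hμ : ‖μ‖ < 1)
    {v : V} (hv : v ∈ f.maxGenEigenspace μ) : Tendsto (fun n => (f ^ n) v) atTop (𝓝 0) := by
  obtain ⟨d, hd⟩ := (mem_maxGenEigenspace f μ v).1 hv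
  simp_rw [pow_apply_eq_sum_choose_of_pow_sub_smul_apply_eq_zero hd]
  simpa using tendsto_finsetSum (range d) fun j _ =>
    (tendsto_choose_mul_pow_sub_nhds_zero hμ j).smul_const (((f - μ • 1) ^ j) v)

theorem norm_le_one_of_hasEigenvalue (hbdd : ∀ v, ∃ C, ∀ n, ‖(f ^ n) v‖ ≤ C) {μ : 𝕜}
    (hμ : f.HasEigenvalue μ) : ‖μ‖ ≤ 1 := by
  obtain ⟨x, hx⟩ := hμ.exists_hasEigenvector
  obtain ⟨C, hC⟩ := hbdd x
  have hx0 : 0 < ‖x‖ := norm_pos_iff.2 hx.2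
  by_contra! hμ1
  obtain ⟨n, hn⟩ :=
    ((tendsto_pow_atTop_atTop_of_one_lt hμ1).eventually_gt_atTop (C / ‖x‖)).exists
  have hCn := hC n
  rw [hx.pow_apply, norm_smul, norm_pow] at hCn
  rw [div_lt_iff₀ hx0] at hn
  linarith

end NormedField

section RCLike

variable {𝕜 V : Type*} [RCLike 𝕜] [NormedAddCommGroup V] [NormedSpace 𝕜 V] {f : End 𝕜 V}

theorem apply_eq_self_of_mem_maxGenEigenspace_one (hbdd : ∀ v, ∃ C, ∀ n, ‖(f ^ n) v‖ ≤ C)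
    {v : V} (hv : v ∈ f.maxGenEigenspace 1) : f v = v := by
  set N := f - 1
  -- if `N² w = 0` then `fⁿ w = w + n • N w`, which stays bounded only if `N w = 0`
  have hker_sq (w : V) (hw : (N ^ 2) w = 0) : N w = 0 := by
    obtain ⟨C, hC⟩ := hbdd w
    have hlin (n : ℕ) : (n : ℝ) * ‖N w‖ ≤ C + ‖w‖ := by
      have := pow_apply_eq_sum_choose_of_pow_sub_smul_apply_eq_zero (f := f) (μ := (1 : 𝕜))
        (by rwa [one_smul]) n
      simp only [sum_range_succ, sum_range_zero, one_pow, mul_one, Nat.choose_zero_right,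
        Nat.choose_one_right, Nat.cast_one, one_smul, pow_zero, pow_one, zero_add,
        one_apply] at this
      calc (n : ℝ) * ‖N w‖ = ‖(f ^ n) w - w‖ := by
            rw [this, add_sub_cancel_left, norm_smul, RCLike.norm_natCast]
        _ ≤ ‖(f ^ n) w‖ + ‖w‖ := norm_sub_le _ _
        _ ≤ C + ‖w‖ := by grw [hC n]
    by_contra hN
    obtain ⟨n, hn⟩ := exists_nat_gt ((C + ‖w‖) / ‖N w‖)
    rw [div_lt_iff₀ (norm_pos_iff.2 hN)] at hn
    linarith [hlin n]
  have hker (d : ℕ) : ∀ w, (N ^ d) w = 0 → N w = 0 := by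
    induction d with
    | zero => intro w hw; simp_all
    | succ d ih =>
      intro w hw
      refine hker_sq w ?_
      rw [sq, mul_apply, ih (N w) (by rwa [← mul_apply, ← pow_succ])]
  obtain ⟨d, hd⟩ : ∃ d, (N ^ d) v = 0 := by simpa using hv
  simpa [N, sub_eq_zero] using hker d v hd

end RCLike

section Complex

variable {V : Type*} [NormedAddCommGroup V] [NormedSpace ℂ V] [FiniteDimensional ℂ V]
  {f : End ℂ V}

theorem exists_tendsto_pow_apply (hbdd : ∀ v, ∃ C, ∀ n, ‖(f ^ n) v‖ ≤ C)
    (hper : ∀ μ, f.HasEigenvalue μ → ‖μ‖ = 1 → μ = 1) (v : V) :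
    ∃ y, Tendsto (fun n => (f ^ n) v) atTop (𝓝 y) := by
  have hv : v ∈ ⨆ μ, f.maxGenEigenspace μ := by simp [iSup_maxGenEigenspace_eq_top]
  induction hv using Submodule.iSup_induction' with
  | mem μ w hw =>
    rcases eq_or_ne w 0 with rfl | hw0
    · exact ⟨0, by simp⟩
    have hμ : f.HasEigenvalue μ :=
      (show f.HasUnifEigenvalue μ ⊤ from Submodule.ne_bot_iff _ |>.2 ⟨w, hw, hw0⟩).lt one_pos
    rcases (norm_le_one_of_hasEigenvalue hbdd hμ).lt_or_eq with hlt | heq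
    · exact ⟨0, tendsto_pow_apply_nhds_zero_of_norm_lt_one hlt hw⟩
    · obtain rfl := hper μ hμ heq
      have hfix : f w = w := apply_eq_self_of_mem_maxGenEigenspace_one hbdd hw
      exact ⟨w, by simp [pow_apply, Function.iterate_fixed hfix]⟩
  | zero => exact ⟨0, by simp⟩
  | add w₁ w₂ _ _ h₁ h₂ =>
    obtain ⟨y₁, hy₁⟩ := h₁
    obtain ⟨y₂, hy₂⟩ := h₂
    exact ⟨y₁ + y₂, by simpa using hy₁.add hy₂⟩

theorem exists_tendsto_pow_mul_apply (hbdd : ∀ v, ∃ C, ∀ n, ‖(f ^ n) v‖ ≤ C) {h : ℕ}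
    (hroot : ∀ ν, f.HasEigenvalue ν → ‖ν‖ = 1 → ν ^ h = 1) (v : V) :
    ∃ y, Tendsto (fun k => (f ^ (h * k)) v) atTop (𝓝 y) := by
  rcases Nat.eq_zero_or_pos h with rfl | hh
  · exact ⟨v, by simp⟩
  simp_rw [pow_mul]
  refine exists_tendsto_pow_apply (fun w => (hbdd w).imp fun C hC k => ?_)
    (fun μ hμ hμ1 => ?_) v
  · rw [← pow_mul]
    exact hC _
  · rw [hasEigenvalue_iff_mem_spectrum, spectrum.map_pow_of_pos f hh] at hμ
    obtain ⟨ν, hν, rfl⟩ := hμ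
    rw [norm_pow, pow_eq_one_iff_of_nonneg (norm_nonneg ν) hh.ne'] at hμ1
    exact hroot ν (.of_mem_spectrum hν) hμ1

end Complex

end Module.End

namespace Matrix

section

variable {ι n : Type*} {l : Filter ι}

theorem exists_mulVec_eq_smul_of_mem_spectrum [Fintype n] [DecidableEq n] {K : Type*}
    [Field K] {A : Matrix n n K} {c : K} (hc : c ∈ spectrum K A) : ∃ x ≠ 0, A *ᵥ x = c • x := by
  rw [← spectrum_toLin', ← Module.End.hasEigenvalue_iff_mem_spectrum] at hc
  obtain ⟨x, hx⟩ := hc.exists_hasEigenvector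
  exact ⟨x, hx.2, by simpa using hx.apply_eq_smul⟩

theorem exists_tendsto_of_forall_exists_tendsto_mulVec [Fintype n] [DecidableEq n]
    {R : Type*} [NonAssocSemiring R] [TopologicalSpace R] {M : ι → Matrix n n R}
    (h : ∀ v, ∃ y, Tendsto (fun k => M k *ᵥ v) l (𝓝 y)) : ∃ L, Tendsto M l (𝓝 L) := by
  choose y hy using h
  refine ⟨of fun i j => y (Pi.single j 1) i,
    tendsto_pi_nhds.2 fun i => tendsto_pi_nhds.2 fun j => ?_⟩
  simpa [Function.comp_def] using ((continuous_apply i).tendsto _).comp (hy (Pi.single j 1))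

theorem exists_tendsto_of_exists_tendsto_map_ofReal {M : ι → Matrix n n ℝ}
    (h : ∃ L, Tendsto (fun k => (M k).map Complex.ofReal) l (𝓝 L)) :
    ∃ L, Tendsto M l (𝓝 L) := by
  obtain ⟨L, hL⟩ := h
  exact ⟨L.map Complex.re, by
    simpa [Function.comp_def] using
      ((continuous_id.matrix_map Complex.continuous_re).tendsto L).comp hL⟩

end

section

variable {n : Type*} [Fintype n] {B : Matrix n n ℝ}

theorem norm_map_ofReal_mulVec_apply_le (hB : ∀ i j, 0 ≤ B i j) (x : n → ℂ) (i : n) :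
    ‖(B.map Complex.ofReal *ᵥ x) i‖ ≤ (B *ᵥ fun j => ‖x j‖) i := by
  simp only [mulVec, dotProduct, map_apply]
  refine (norm_sum_le _ _).trans_eq (sum_congr rfl fun j _ => ?_)
  rw [norm_mul, Complex.norm_real, Real.norm_of_nonneg (hB i j)]

variable [DecidableEq n]

theorem norm_map_ofReal_mulVec_le (hB : B ∈ colStochastic ℝ n) (x : n → ℂ) :
    ‖B.map Complex.ofReal *ᵥ x‖ ≤ ∑ j, ‖x j‖ := by
  refine (pi_norm_le_iff_of_nonneg (by positivity)).2 fun i =>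
    (norm_map_ofReal_mulVec_apply_le hB.1 x i).trans ?_
  exact sum_le_sum fun j _ =>
    mul_le_of_le_one_left (norm_nonneg _) (le_one_of_mem_colStochastic hB)

theorem mulVec_norm_eq_of_map_ofReal_mulVec_eq_smul (hB : B ∈ colStochastic ℝ n) {c : ℂ}
    (hc : ‖c‖ = 1) {x : n → ℂ} (hx : B.map Complex.ofReal *ᵥ x = c • x) :
    (B *ᵥ fun j => ‖x j‖) = fun j => ‖x j‖ := by
  have hle (i : n) : ‖x i‖ ≤ (B *ᵥ fun j => ‖x j‖) i := by
    simpa [hx, norm_smul, hc] using norm_map_ofReal_mulVec_apply_le hB.1 x i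
  funext i
  exact ((sum_eq_sum_iff_of_le fun i _ => hle i).1
    (sum_mulVec_of_mem_colStochastic hB).symm i (mem_univ i)).symm

theorem pos_of_mulVec_eq_self (hB : B ∈ colStochastic ℝ n)
    (hirr : ∀ i j, ∃ k : ℕ, 0 < (B ^ k) i j) {a : n → ℝ} (ha : B *ᵥ a = a) (ha0 : ∀ i, 0 ≤ a i)
    {i₀ : n} (hi₀ : 0 < a i₀) (i : n) : 0 < a i := by
  have hpow (k : ℕ) : B ^ k *ᵥ a = a := by
    induction k with
    | zero => simp
    | succ k ih => rw [pow_succ, ← mulVec_mulVec, ha, ih]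
  obtain ⟨k, hk⟩ := hirr i i₀
  rw [← hpow k]
  exact lt_of_lt_of_le (mul_pos hk hi₀) (single_le_sum (f := fun j => (B ^ k) i j * a j)
    (fun j _ => mul_nonneg ((pow_mem hB k).1 _ _) (ha0 j)) (mem_univ i₀))

theorem div_norm_eq_mul_div_norm_of_ne_zero (hB : B ∈ colStochastic ℝ n) {c : ℂ}
    (hc : ‖c‖ = 1) {x : n → ℂ} (hx : B.map Complex.ofReal *ᵥ x = c • x) (hx0 : ∀ i, x i ≠ 0)
    {i j : n} (hij : B i j ≠ 0) : x j / ‖x j‖ = c * (x i / ‖x i‖) := by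
  set a : n → ℝ := fun k => ‖x k‖
  have ha : B *ᵥ a = a := mulVec_norm_eq_of_map_ofReal_mulVec_eq_smul hB hc hx
  have ha0 (k : n) : 0 < a k := norm_pos_iff.2 (hx0 k)
  -- row `i` of the eigen-equation, divided by `a i`, writes `c * (x i / a i)` as a convex
  -- combination of the unit vectors `x k / a k`, so strict convexity of `ℂ` applies
  set w : n → ℝ := fun k => B i k * a k / a i
  have hw1 : ∑ k, w k = 1 := by
    rw [← sum_div, div_eq_one_iff_eq (ha0 i).ne']
    exact congrFun ha i
  have hcomb : ∑ k, w k • (x k / a k) = c * (x i / a i) := by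
    have := congrFun hx i
    simp only [mulVec, dotProduct, map_apply, Pi.smul_apply, smul_eq_mul] at this
    rw [mul_div_assoc', ← this, sum_div]
    refine sum_congr rfl fun k _ => ?_
    have : (a k : ℂ) ≠ 0 := Complex.ofReal_ne_zero.2 (ha0 k).ne'
    simp only [w, Complex.real_smul]
    push_cast
    field_simp
  have hunit (k : n) : ‖x k / a k‖ = 1 := by
    simp [a, hx0 k]
  refine (hcomb ▸ sum_smul_eq_of_norm_sum_smul_eq (fun k => ?_) hw1 (fun k => (hunit k).le) ?_
    ?_).symm
  · exact div_nonneg (mul_nonneg (nonneg_of_mem_colStochastic hB) (ha0 k).le) (ha0 i).le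
  · rw [hcomb, norm_mul, hc, one_mul, hunit]
  · exact div_ne_zero (mul_ne_zero hij (ha0 j).ne') (ha0 i).ne'

theorem smul_spectrum_map_ofReal_eq (hB : B ∈ colStochastic ℝ n)
    (hirr : ∀ i j, ∃ k : ℕ, 0 < (B ^ k) i j) {c : ℂ}
    (hc : c ∈ spectrum ℂ (B.map Complex.ofReal)) (hc1 : ‖c‖ = 1) :
    c • spectrum ℂ (B.map Complex.ofReal) = spectrum ℂ (B.map Complex.ofReal) := by
  set A := B.map Complex.ofReal
  obtain ⟨x, hx0, hx⟩ := exists_mulVec_eq_smul_of_mem_spectrum hc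
  obtain ⟨i₀, hi₀⟩ := Function.ne_iff.1 hx0
  have hxne (i : n) : x i ≠ 0 := norm_pos_iff.1 <|
    pos_of_mulVec_eq_self hB hirr (mulVec_norm_eq_of_map_ofReal_mulVec_eq_smul hB hc1 hx)
      (fun _ => norm_nonneg _) (norm_pos_iff.2 hi₀) i
  set D := diagonal fun i => x i / ‖x i‖
  obtain ⟨U, hU⟩ : IsUnit D := isUnit_diagonal.2 <| Pi.isUnit_iff.2 fun i =>
    (div_ne_zero (hxne i) (by simpa using hxne i)).isUnit
  have hAD : A * U = U * (c • A) := by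
    rw [hU]
    ext i j
    rw [mul_diagonal, diagonal_mul, smul_apply, smul_eq_mul]
    by_cases hij : B i j = 0
    · simp [A, hij]
    · rw [div_norm_eq_mul_div_norm_of_ne_zero hB hc1 hx hxne hij]
      ring
  have hconj : c • A = (↑U⁻¹ : Matrix n n ℂ) * A * U := by
    rw [mul_assoc, hAD, Units.inv_mul_cancel_left]
  have hc0 : c ≠ 0 := by rintro rfl; simp at hc1
  calc c • spectrum ℂ A = spectrum ℂ (Units.mk0 c hc0 • A) :=
        (spectrum.unit_smul_eq_smul A (Units.mk0 c hc0)).symm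
    _ = spectrum ℂ A := by rw [Units.smul_mk0, hconj, spectrum.units_conjugate']

theorem pow_ncard_peripheral_spectrum_eq_one (hB : B ∈ colStochastic ℝ n)
    (hirr : ∀ i j, ∃ k : ℕ, 0 < (B ^ k) i j) {c : ℂ}
    (hc : c ∈ spectrum ℂ (B.map Complex.ofReal)) (hc1 : ‖c‖ = 1) :
    c ^ Set.ncard {z : ℂ | z ∈ spectrum ℂ (B.map Complex.ofReal) ∧ ‖z‖ = 1} = 1 := by
  refine pow_ncard_eq_one_of_mul_mem ((finite_spectrum _).subset fun _ hz => hz.1) (by simp)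
    fun z hz => ⟨?_, by rw [norm_mul, hc1, hz.2, one_mul]⟩
  rw [← smul_spectrum_map_ofReal_eq hB hirr hc hc1]
  exact Set.smul_mem_smul_set hz.1

end

end Matrix

theorem stochastic_irreducible_powers_converge_general
    (m : ℕ) (B : Matrix (Fin m) (Fin m) ℝ)
    (hpos : ∀ i j, 0 ≤ B i j) (hcol : ∀ j, ∑ i, B i j = 1)
    (hirr : ∀ i j, ∃ k : ℕ, 1 ≤ k ∧ 0 < (B ^ k) i j)
    (h : ℕ)
    (hh : h = Set.ncard {z : ℂ | z ∈ spectrum ℂ (B.map (Complex.ofReal)) ∧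
      ‖z‖ = 1}) :
    ∃ L : Matrix (Fin m) (Fin m) ℝ,
      Filter.Tendsto (fun k : ℕ => B ^ (h * k)) Filter.atTop (nhds L) := by
  have hB : B ∈ colStochastic ℝ (Fin m) := mem_colStochastic_iff_sum.2 ⟨hpos, hcol⟩
  have hirr' (i j : Fin m) : ∃ k : ℕ, 0 < (B ^ k) i j := (hirr i j).imp fun _ => And.right
  set f : Module.End ℂ (Fin m → ℂ) := toLin' (B.map Complex.ofReal)
  have hpow (n : ℕ) (v : Fin m → ℂ) : (f ^ n) v = (B ^ n).map Complex.ofReal *ᵥ v := by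
    rw [← toLin'_pow, toLin'_apply]
    exact congrArg (· *ᵥ v) (Matrix.map_pow B Complex.ofRealHom n).symm
  have hbdd (v : Fin m → ℂ) : ∃ C, ∀ n, ‖(f ^ n) v‖ ≤ C :=
    ⟨∑ j, ‖v j‖, fun n => hpow n v ▸ norm_map_ofReal_mulVec_le (pow_mem hB n) v⟩
  have hroot (ν : ℂ) (hν : f.HasEigenvalue ν) (hν1 : ‖ν‖ = 1) : ν ^ h = 1 := by
    rw [Module.End.hasEigenvalue_iff_mem_spectrum, spectrum_toLin'] at hν
    exact hh ▸ pow_ncard_peripheral_spectrum_eq_one hB hirr' hν hν1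
  refine exists_tendsto_of_exists_tendsto_map_ofReal
    (exists_tendsto_of_forall_exists_tendsto_mulVec fun v => ?_)
  simpa [hpow] using Module.End.exists_tendsto_pow_mul_apply hbdd hroot v

/-- For a column-stochastic irreducible matrix `B` with index of imprimitivity
`h = |σ(B) ∩ Γ|`, the powers `B^{hk}` converge as `k → ∞`. -/
theorem stochastic_irreducible_powers_converge
    (m : ℕ) (hm : 1 ≤ m) (B : Matrix (Fin m) (Fin m) ℝ)
    (hpos : ∀ i j, 0 ≤ B i j) (hcol : ∀ j, ∑ i, B i j = 1)
    (hirr : ∀ i j, ∃ k : ℕ, 1 ≤ k ∧ 0 < (B ^ k) i j)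
    (h : ℕ)
    (hh : h = Set.ncard {z : ℂ | z ∈ spectrum ℂ (B.map (Complex.ofReal)) ∧
      ‖z‖ = 1}) :
    ∃ L : Matrix (Fin m) (Fin m) ℝ,
      Filter.Tendsto (fun k : ℕ => B ^ (h * k)) Filter.atTop (nhds L) :=
  stochastic_irreducible_powers_converge_general m B hpos hcol hirr h hh
end
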